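/- Define f(n) = 1/2 + 2^{-n/2} cos(nπ/4) for natural numbers n. For all n ≥ 3, f(n) ≤ 9/16, and equality holds exactly at n = 7 and n = 8. -/

import Mathlib

noncomputable def f (n : ℕ) : ℝ :=
  1 / 2 + ((Real.sqrt 2) ^ n)⁻¹ * Real.cos (n * Real.pi / 4)

lemma cos_mod8 (q r : ℕ) :
    Real.cos (((8 * q + r : ℕ) : ℝ) * Real.pi / 4) = Real.cos ((r : ℝ) * Real.pi / 4) := by
  have h : ((8 * q + r : ℕ) : ℝ) * Real.pi / 4
      = (r : ℝ) * Real.pi / 4 + ((q : ℤ) : ℝ) * (2 * Real.pi) := by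
    push_cast; ring
  rw [h, Real.cos_add_int_mul_two_pi]

lemma aux_inv (m : ℕ) (h : 8 ≤ m) :
    ((Real.sqrt 2) ^ m)⁻¹ ≤ 1 / 16 ∧ (((Real.sqrt 2) ^ m)⁻¹ = 1 / 16 ↔ m = 8) := by
  have h2 : Real.sqrt 2 ^ 2 = 2 := Real.sq_sqrt (by norm_num)
  have hs0 : (0:ℝ) < Real.sqrt 2 := Real.sqrt_pos.mpr (by norm_num)
  have h1 : 1 < Real.sqrt 2 := by nlinarith
  have h8 : Real.sqrt 2 ^ 8 = 16 := by
    have : Real.sqrt 2 ^ 8 = (Real.sqrt 2 ^ 2) ^ 4 := by ring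
    rw [this, h2]; norm_num
  have hmono : (16:ℝ) ≤ Real.sqrt 2 ^ m := by
    rw [← h8]; exact pow_le_pow_right₀ (le_of_lt h1) h
  have hpos : (0:ℝ) < Real.sqrt 2 ^ m := pow_pos hs0 m
  constructor
  · rw [inv_le_comm₀ hpos (by norm_num)]
    linarith
  · constructor
    · intro he
      by_contra hne
      have h9 : 9 ≤ m := by omega
      have : (16:ℝ) < Real.sqrt 2 ^ m := by
        rw [← h8]; exact pow_lt_pow_right₀ h1 (by omega)
      have : ((Real.sqrt 2) ^ m)⁻¹ < 1 / 16 := by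
        rw [inv_lt_comm₀ hpos (by norm_num)]; linarith
      linarith
    · intro he; subst he; rw [h8]; norm_num

theorem f_le_and_eq_iff (n : ℕ) (hn : 3 ≤ n) :
    f n ≤ 9 / 16 ∧ (f n = 9 / 16 ↔ n = 7 ∨ n = 8) := by
  have h2 : Real.sqrt 2 ^ 2 = 2 := Real.sq_sqrt (by norm_num)
  have hs0 : (0:ℝ) < Real.sqrt 2 := Real.sqrt_pos.mpr (by norm_num)
  have hs2 : Real.sqrt 2 * Real.sqrt 2 = 2 := by nlinarith
  have hpos : ∀ m : ℕ, (0:ℝ) < ((Real.sqrt 2) ^ m)⁻¹ := fun m => by positivity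
  have hdiv : Real.sqrt 2 / 2 = (Real.sqrt 2)⁻¹ := by
    rw [eq_comm, inv_eq_iff_eq_inv, inv_div]; field_simp; exact h2
  have hsucc : ∀ m : ℕ, ((Real.sqrt 2) ^ m)⁻¹ * (Real.sqrt 2 / 2) = ((Real.sqrt 2) ^ (m+1))⁻¹ := by
    intro m
    rw [hdiv, pow_succ, mul_inv]
  obtain ⟨q, r, hqr, hr8⟩ : ∃ q r, n = 8 * q + r ∧ r < 8 := ⟨n / 8, n % 8, by omega, by omega⟩
  subst hqr
  unfold f
  rw [cos_mod8]
  interval_cases r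
  · -- r = 0 : cos = 1, n = 8q ≥ 8
    have hc : Real.cos ((0:ℕ) * Real.pi / 4) = 1 := by norm_num
    rw [hc, mul_one]
    obtain ⟨hle, hiff⟩ := aux_inv (8 * q + 0) (by omega)
    constructor
    · linarith
    · constructor
      · intro he
        have : ((Real.sqrt 2) ^ (8*q+0))⁻¹ = 1/16 := by linarith
        have := hiff.mp this; omega
      · intro he
        have h8 : 8 * q + 0 = 8 := by omega
        have := hiff.mpr h8; linarith
  · -- r = 1 : cos = √2/2, n ≥ 9
    have hc : ((1:ℕ):ℝ) * Real.pi / 4 = Real.pi / 4 := by push_cast; ring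
    rw [hc, Real.cos_pi_div_four, hsucc]
    obtain ⟨hle, hiff⟩ := aux_inv (8*q+1+1) (by omega)
    have hne : ((Real.sqrt 2) ^ (8*q+1+1))⁻¹ ≠ 1/16 := fun h => by have := hiff.mp h; omega
    have hlt : ((Real.sqrt 2) ^ (8*q+1+1))⁻¹ < 1/16 := lt_of_le_of_ne hle hne
    constructor
    · linarith
    · constructor
      · intro he; linarith
      · intro he; omega
  · -- r = 2 : cos = 0
    have hc : ((2:ℕ):ℝ) * Real.pi / 4 = Real.pi / 2 := by push_cast; ring
    rw [hc, Real.cos_pi_div_two, mul_zero]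
    refine ⟨by norm_num, ?_, by omega⟩
    intro he; norm_num at he
  · -- r = 3 : cos = -√2/2 < 0
    have hc : ((3:ℕ):ℝ) * Real.pi / 4 = Real.pi - Real.pi / 4 := by push_cast; ring
    rw [hc, Real.cos_pi_sub, Real.cos_pi_div_four]
    have hneg : ((Real.sqrt 2) ^ (8*q+3))⁻¹ * -(Real.sqrt 2 / 2) < 0 := by
      apply mul_neg_of_pos_of_neg (hpos _)
      simp only [neg_neg, neg_lt, neg_zero]; positivity
    refine ⟨by linarith, fun he => by linarith, fun he => by omega⟩
  · -- r = 4 : cos = -1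
    have hc : ((4:ℕ):ℝ) * Real.pi / 4 = Real.pi := by push_cast; ring
    rw [hc, Real.cos_pi]
    have hneg : ((Real.sqrt 2) ^ (8*q+4))⁻¹ * (-1:ℝ) < 0 := by
      apply mul_neg_of_pos_of_neg (hpos _); norm_num
    refine ⟨by linarith, fun he => by linarith, fun he => by omega⟩
  · -- r = 5 : cos(5π/4) = -cos(π/4)
    have hc : ((5:ℕ):ℝ) * Real.pi / 4 = Real.pi / 4 + Real.pi := by push_cast; ring
    rw [hc, Real.cos_add_pi, Real.cos_pi_div_four]
    have hneg : ((Real.sqrt 2) ^ (8*q+5))⁻¹ * -(Real.sqrt 2 / 2) < 0 := by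
      apply mul_neg_of_pos_of_neg (hpos _)
      simp only [neg_neg, neg_lt, neg_zero]; positivity
    refine ⟨by linarith, fun he => by linarith, fun he => by omega⟩
  · -- r = 6 : cos(3π/2) = 0
    have hc : ((6:ℕ):ℝ) * Real.pi / 4 = Real.pi / 2 + Real.pi := by push_cast; ring
    rw [hc, Real.cos_add_pi, Real.cos_pi_div_two, neg_zero, mul_zero]
    refine ⟨by norm_num, ?_, by omega⟩
    intro he; norm_num at he
  · -- r = 7 : cos(7π/4) = cos(π/4), equality at n = 7
    have hc : ((7:ℕ):ℝ) * Real.pi / 4 = 2 * Real.pi - Real.pi / 4 := by push_cast; ring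
    rw [hc, Real.cos_two_pi_sub, Real.cos_pi_div_four, hsucc]
    obtain ⟨hle, hiff⟩ := aux_inv (8*q+7+1) (by omega)
    constructor
    · linarith
    · constructor
      · intro he
        have : ((Real.sqrt 2) ^ (8*q+7+1))⁻¹ = 1/16 := by linarith
        have := hiff.mp this; omega
      · intro he
        have h8 : 8 * q + 7 + 1 = 8 := by omega
        have := hiff.mpr h8; linarith
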